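/- arXiv:2605.20604 — 7 statements merged into one kernel-verified Lean document; each statement's English description precedes it below -/
import Mathlib

section
/- Let H be a real inner product space, (Ω, P) a probability space, X : Ω → H a Borel-measurable random element, S : H → H a bounded self-adjoint linear operator, λ ∈ (0,∞), and suppose the regularized direction set V_λ(S) is nonempty. Then for every μ ∈ H and every x ∈ H, inf_{v ∈ V_λ(S)} P(⟨X − x, v⟩ ≥ 0) ≥ 1 − sup_{v ∈ V_λ(S)} P(⟨X − μ, v⟩ < λ ‖x − μ‖ ‖S v‖). -/
open MeasureTheory
open scoped RealInnerProductSpace ENNReal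

/-- The regularized direction set `V_λ(S)`:
unit vectors `v` with a preimage `u` under `S` of norm at most `λ`. -/
def regDirSet {H : Type*} [NormedAddCommGroup H] [InnerProductSpace ℝ H]
    (S : H →L[ℝ] H) (l : ℝ) : Set H :=
  {v | ‖v‖ = 1 ∧ ∃ u : H, S u = v ∧ ‖u‖ ≤ l}

/-- the key lower bound in the proof of non-degeneracy of the CRHD:
`inf_{v ∈ V_λ} P(⟨X − x, v⟩ ≥ 0) ≥ 1 − sup_{v ∈ V_λ} P(⟨X − μ, v⟩ < λ‖x − μ‖‖S v‖)`. -/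
theorem crhd_depth_lower_bound {H : Type*} [NormedAddCommGroup H]
    [InnerProductSpace ℝ H] [MeasurableSpace H] [BorelSpace H]
    {Ω : Type*} [MeasurableSpace Ω] (P : Measure Ω) [IsProbabilityMeasure P]
    (X : Ω → H) (hX : Measurable X)
    (S : H →L[ℝ] H) (hS : ∀ x y : H, ⟪S x, y⟫ = ⟪x, S y⟫)
    (l : ℝ) (hl : 0 < l) (hne : (regDirSet S l).Nonempty)
    (μ x : H) :
    1 - ⨆ v ∈ regDirSet S l, P {ω | ⟪X ω - μ, v⟫ < l * ‖x - μ‖ * ‖S v‖}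
      ≤ ⨅ v ∈ regDirSet S l, P {ω | 0 ≤ ⟪X ω - x, v⟫} := by
  refine le_iInf₂ fun v hv => ?_
  obtain ⟨hv1, u, huv, hul⟩ := hv
  -- 1 ≤ l * ‖S v‖
  have h1 : (1 : ℝ) ≤ l * ‖S v‖ := by
    have : (1 : ℝ) = ⟪u, S v⟫ := by
      rw [← hS, huv, real_inner_self_eq_norm_sq, hv1]; norm_num
    calc (1 : ℝ) = ⟪u, S v⟫ := this
      _ ≤ ‖u‖ * ‖S v‖ := real_inner_le_norm u (S v)
      _ ≤ l * ‖S v‖ := by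
          exact mul_le_mul_of_nonneg_right hul (norm_nonneg _)
  -- pointwise inclusion of the complement
  have hsub : {ω | ⟪X ω - μ, v⟫ < l * ‖x - μ‖ * ‖S v‖}ᶜ ⊆
      {ω | 0 ≤ ⟪X ω - x, v⟫} := by
    intro ω hω
    simp only [Set.mem_compl_iff, Set.mem_setOf_eq, not_lt] at hω
    have hinner : ⟪x - μ, v⟫ ≤ l * ‖x - μ‖ * ‖S v‖ := by
      calc ⟪x - μ, v⟫ ≤ ‖x - μ‖ * ‖v‖ := real_inner_le_norm _ _
        _ = ‖x - μ‖ * 1 := by rw [hv1]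
        _ ≤ ‖x - μ‖ * (l * ‖S v‖) := by
            exact mul_le_mul_of_nonneg_left h1 (norm_nonneg _)
        _ = l * ‖x - μ‖ * ‖S v‖ := by ring
    have : ⟪X ω - x, v⟫ = ⟪X ω - μ, v⟫ - ⟪x - μ, v⟫ := by
      rw [← inner_sub_left]; congr 1; abel
    rw [Set.mem_setOf_eq, this]
    linarith
  -- measurability of the bad set
  have hmeas : MeasurableSet {ω | ⟪X ω - μ, v⟫ < l * ‖x - μ‖ * ‖S v‖} := by
    have hcont : Continuous fun h : H => ⟪h - μ, v⟫ :=
      (continuous_id.sub continuous_const).inner continuous_const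
    have : Measurable fun ω => ⟪X ω - μ, v⟫ := hcont.measurable.comp hX
    exact measurableSet_lt this measurable_const
  calc 1 - ⨆ v ∈ regDirSet S l, P {ω | ⟪X ω - μ, v⟫ < l * ‖x - μ‖ * ‖S v‖}
      ≤ 1 - P {ω | ⟪X ω - μ, v⟫ < l * ‖x - μ‖ * ‖S v‖} := by
        refine tsub_le_tsub_left ?_ 1
        exact le_biSup (f := fun v => P {ω | ⟪X ω - μ, v⟫ < l * ‖x - μ‖ * ‖S v‖})
          (show v ∈ regDirSet S l from ⟨hv1, u, huv, hul⟩)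
    _ = P {ω | ⟪X ω - μ, v⟫ < l * ‖x - μ‖ * ‖S v‖}ᶜ :=
        (prob_compl_eq_one_sub hmeas).symm
    _ ≤ P {ω | 0 ≤ ⟪X ω - x, v⟫} := measure_mono hsub
end

section
/- (Theorem 1, non-degeneracy of the CRHD; core deterministic form.) Let H be a real inner product space, (Ω, P) a probability space, X : Ω → H a Borel-measurable random element, μ ∈ H, S : H → H a bounded self-adjoint linear operator, λ ∈ (0,∞), and suppose the regularized direction set V_λ(S) is nonempty. Assume the distributional condition: for every t ∈ (0,∞), sup_{v ∈ V_λ(S)} P(⟨X − μ, v⟩ ≤ t ‖S v‖) < 1. Then for every x ∈ H it holds that inf_{v ∈ V_λ(S)} P(⟨X − x, v⟩ ≥ 0) > 0. (Since the depth-evaluation trajectory X₀ is independent of X, the conditional halfspace probability in the CRHD given X₀ = x equals the unconditional probability appearing here, so the conclusion D_λ(𝕩₀) > 0 almost surely of Theorem 1 reduces to this statement.) -/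
open MeasureTheory
open scoped RealInnerProductSpace ENNReal

/-- Theorem 1, non-degeneracy of the CRHD; core deterministic form:
under the distributional condition
`sup_{v ∈ V_λ} P(⟨X − μ, v⟩ ≤ t‖S v‖) < 1` for all `t > 0`,
the regularized halfspace depth `inf_{v ∈ V_λ} P(⟨X − x, v⟩ ≥ 0)` is positive at
every point `x`. -/
theorem crhd_nondegeneracy {H : Type*} [NormedAddCommGroup H]
    [InnerProductSpace ℝ H] [MeasurableSpace H] [BorelSpace H]
    {Ω : Type*} [MeasurableSpace Ω] (P : Measure Ω) [IsProbabilityMeasure P]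
    (X : Ω → H) (hX : Measurable X) (μ : H)
    (S : H →L[ℝ] H) (hS : ∀ x y : H, ⟪S x, y⟫ = ⟪x, S y⟫)
    (l : ℝ) (hl : 0 < l) (hne : (regDirSet S l).Nonempty)
    (hcond : ∀ t : ℝ, 0 < t →
      (⨆ v ∈ regDirSet S l, P {ω | ⟪X ω - μ, v⟫ ≤ t * ‖S v‖}) < 1) :
    ∀ x : H, 0 < ⨅ v ∈ regDirSet S l, P {ω | 0 ≤ ⟪X ω - x, v⟫} := by
  intro x
  set t : ℝ := l * (l * ‖S (μ - x)‖ + 1) with ht_def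
  have ht : 0 < t := by positivity
  have hsup := hcond t ht
  set s := ⨆ v ∈ regDirSet S l, P {ω | ⟪X ω - μ, v⟫ ≤ t * ‖S v‖} with hs
  have key : ∀ v ∈ regDirSet S l, 1 - s ≤ P {ω | 0 ≤ ⟪X ω - x, v⟫} := by
    intro v hv
    obtain ⟨hv1, u, hu, hul⟩ := hv
    have hmeas : MeasurableSet {ω | ⟪X ω - μ, v⟫ ≤ t * ‖S v‖} := by
      have hm : Measurable fun ω => ⟪X ω - μ, v⟫ :=
        (((continuous_id.sub continuous_const).inner continuous_const).measurable).comp hX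
      exact measurableSet_le hm measurable_const
    have hsubset : {ω | ⟪X ω - μ, v⟫ ≤ t * ‖S v‖}ᶜ ⊆ {ω | 0 ≤ ⟪X ω - x, v⟫} := by
      intro ω hω
      simp only [Set.mem_compl_iff, Set.mem_setOf_eq, not_le] at hω ⊢
      have h1 : (1:ℝ) ≤ l * ‖S v‖ := by
        have e1 : (1:ℝ) = ⟪u, S v⟫ := by
          rw [← hS u v, hu, real_inner_self_eq_norm_sq, hv1]; norm_num
        have e2 : ⟪u, S v⟫ ≤ ‖u‖ * ‖S v‖ := real_inner_le_norm u (S v)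
        have e3 : ‖u‖ * ‖S v‖ ≤ l * ‖S v‖ :=
          mul_le_mul_of_nonneg_right hul (norm_nonneg _)
        linarith
      have h2 : l * ‖S (μ - x)‖ + 1 ≤ t * ‖S v‖ := by
        have hnn : (0:ℝ) ≤ l * ‖S (μ - x)‖ + 1 := by positivity
        have : (l * ‖S (μ - x)‖ + 1) * 1 ≤ (l * ‖S (μ - x)‖ + 1) * (l * ‖S v‖) :=
          mul_le_mul_of_nonneg_left h1 hnn
        calc l * ‖S (μ - x)‖ + 1 = (l * ‖S (μ - x)‖ + 1) * 1 := by ring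
          _ ≤ (l * ‖S (μ - x)‖ + 1) * (l * ‖S v‖) := this
          _ = t * ‖S v‖ := by rw [ht_def]; ring
      have h3 : -(l * ‖S (μ - x)‖) ≤ ⟪μ - x, v⟫ := by
        have e1 : ⟪μ - x, v⟫ = ⟪S (μ - x), u⟫ := by rw [hS (μ - x) u, hu]
        have e2 : |⟪S (μ - x), u⟫| ≤ ‖S (μ - x)‖ * ‖u‖ := abs_real_inner_le_norm _ _
        have e3 : ‖S (μ - x)‖ * ‖u‖ ≤ ‖S (μ - x)‖ * l :=
          mul_le_mul_of_nonneg_left hul (norm_nonneg _)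
        have := neg_abs_le ⟪S (μ - x), u⟫
        rw [e1]
        nlinarith
      have h4 : ⟪X ω - x, v⟫ = ⟪X ω - μ, v⟫ + ⟪μ - x, v⟫ := by
        rw [← inner_add_left]
        congr 1
        abel
      linarith
    calc 1 - s ≤ 1 - P {ω | ⟪X ω - μ, v⟫ ≤ t * ‖S v‖} := by
          apply tsub_le_tsub_left
          rw [hs]
          exact le_biSup (fun v => P {ω | ⟪X ω - μ, v⟫ ≤ t * ‖S v‖})
            (show v ∈ regDirSet S l from ⟨hv1, u, hu, hul⟩)
      _ = P {ω | ⟪X ω - μ, v⟫ ≤ t * ‖S v‖}ᶜ := (prob_compl_eq_one_sub hmeas).symm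
      _ ≤ P {ω | 0 ≤ ⟪X ω - x, v⟫} := measure_mono hsubset
  have hpos : (0:ℝ≥0∞) < 1 - s := tsub_pos_of_lt hsup
  exact lt_of_lt_of_le hpos (le_iInf₂ key)
end

section
/- Let H be a separable real Hilbert space with orthonormal (Hilbert) basis (φ_k)_{k≥1}, let γ_k > 0 for all k with γ_1 ≥ γ_k for all k, and let S : H → H be a bounded self-adjoint linear operator with S φ_k = γ_k^{1/2} φ_k for all k. If λ > γ_1^{-1/2}, then for every w ∈ H with w ≠ 0 there exists v in the regularized direction set V_λ(S) such that ⟨w, v⟩ > 0. -/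
open scoped RealInnerProductSpace

set_option maxHeartbeats 1000000

/-- in a separable real Hilbert space with Hilbert basis `(φ_k)`,
eigenvalues `γ_k > 0` with `γ_1` largest, `S φ_k = γ_k^{1/2} φ_k`, and
`λ > γ_1^{-1/2}`, for every nonzero `w` there is a direction `v ∈ V_λ(S)` with
`⟨w, v⟩ > 0`. -/
theorem exists_separating_direction {H : Type*} [NormedAddCommGroup H]
    [InnerProductSpace ℝ H] [CompleteSpace H]
    (φ : HilbertBasis ℕ ℝ H)
    (γ : ℕ → ℝ) (hγpos : ∀ k, 0 < γ k) (hγmax : ∀ k, γ k ≤ γ 0)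
    (S : H →L[ℝ] H) (hS : ∀ x y : H, ⟪S x, y⟫ = ⟪x, S y⟫)
    (hSφ : ∀ k, S (φ k) = Real.sqrt (γ k) • φ k)
    (l : ℝ) (hl : (Real.sqrt (γ 0))⁻¹ < l) :
    ∀ w : H, w ≠ 0 → ∃ v ∈ regDirSet S l, 0 < ⟪w, v⟫ := by
  intro w hw
  have hon := φ.orthonormal
  have hnφ : ∀ i, ‖φ i‖ = 1 := fun i => hon.1 i
  have hsq0 : 0 < Real.sqrt (γ 0) := Real.sqrt_pos.2 (hγpos 0)
  have hl0 : (0:ℝ) < l := lt_trans (by positivity) hl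
  have norm_le_of_sq : ∀ y : H, ‖y‖ ^ 2 ≤ l ^ 2 → ‖y‖ ≤ l := by
    intro y hy
    nlinarith [norm_nonneg y, hl0]
  by_cases ha : ⟪φ 0, w⟫ = 0
  · -- the coefficient along φ 0 vanishes; mix φ 0 with a basis vector seeing w
    obtain ⟨k, hk⟩ : ∃ k, ⟪φ k, w⟫ ≠ 0 := by
      by_contra h
      push_neg at h
      exact hw (φ.repr.injective (by ext i; simp [φ.repr_apply_apply, h i]))
    set c := ⟪φ k, w⟫ with hc
    have hk0 : k ≠ 0 := fun h => hk (by rw [hc, h]; exact ha)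
    have hsqk : 0 < Real.sqrt (γ k) := Real.sqrt_pos.2 (hγpos k)
    have hγ0inv : (γ 0)⁻¹ < l ^ 2 := by
      have h1 : ((Real.sqrt (γ 0))⁻¹) ^ 2 < l ^ 2 :=
        pow_lt_pow_left₀ hl (by positivity) (by norm_num)
      have h2 : ((Real.sqrt (γ 0))⁻¹) ^ 2 = (γ 0)⁻¹ := by
        rw [← Real.sqrt_inv]
        exact Real.sq_sqrt (inv_nonneg.2 (hγpos 0).le)
      linarith [h1, h2.symm.le]
    set t := Real.sqrt ((l ^ 2 - (γ 0)⁻¹) * γ k) with htdef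
    have htarg : (0:ℝ) < (l ^ 2 - (γ 0)⁻¹) * γ k :=
      mul_pos (by linarith) (hγpos k)
    have htpos : 0 < t := Real.sqrt_pos.2 htarg
    have ht2 : t ^ 2 = (l ^ 2 - (γ 0)⁻¹) * γ k := Real.sq_sqrt htarg.le
    set s : ℝ := if 0 < c then 1 else -1 with hsdef
    have hs2 : s ^ 2 = 1 := by
      rcases lt_or_ge 0 c with h | h <;> simp [hsdef, h, not_lt.2]
    have hsc : 0 < s * c := by
      rcases lt_trichotomy c 0 with h | h | h
      · have : s = -1 := by simp [hsdef, not_lt.2 h.le]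
        rw [this]; linarith
      · exact absurd h hk
      · have : s = 1 := by simp [hsdef, h]
        rw [this]; linarith
    set n := Real.sqrt (1 + t ^ 2) with hndef
    have hn2 : n ^ 2 = 1 + t ^ 2 := Real.sq_sqrt (by positivity)
    have hn1 : 1 ≤ n := by
      rw [hndef]
      have := Real.sqrt_le_sqrt (show (1:ℝ) ≤ 1 + t ^ 2 by nlinarith)
      simpa using this
    have hnpos : 0 < n := lt_of_lt_of_le one_pos hn1
    have hinner0k : ⟪φ 0, φ k⟫ = 0 := hon.2 (Ne.symm hk0)
    set x := φ 0 + (t * s) • φ k with hxdef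
    set y := (Real.sqrt (γ 0))⁻¹ • φ 0 + (t * s * (Real.sqrt (γ k))⁻¹) • φ k
      with hydef
    have hxnorm : ‖x‖ = n := by
      have hsq : ‖x‖ ^ 2 = 1 + t ^ 2 := by
        rw [hxdef, @norm_add_sq_real, real_inner_smul_right, hinner0k,
          norm_smul, hnφ, hnφ, Real.norm_eq_abs]
        simp only [mul_one, mul_zero]
        rw [sq_abs]
        nlinarith [hs2]
      rw [(Real.sqrt_sq (norm_nonneg x)).symm, hsq, hndef]
    have hynorm : ‖y‖ ^ 2 = (γ 0)⁻¹ + t ^ 2 * (γ k)⁻¹ := by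
      have h0 : ((Real.sqrt (γ 0))⁻¹) ^ 2 = (γ 0)⁻¹ := by
        rw [← Real.sqrt_inv]; exact Real.sq_sqrt (inv_nonneg.2 (hγpos 0).le)
      have hk' : ((Real.sqrt (γ k))⁻¹) ^ 2 = (γ k)⁻¹ := by
        rw [← Real.sqrt_inv]; exact Real.sq_sqrt (inv_nonneg.2 (hγpos k).le)
      rw [hydef, @norm_add_sq_real, real_inner_smul_left, real_inner_smul_right,
        hinner0k, norm_smul, norm_smul, hnφ, hnφ, Real.norm_eq_abs,
        Real.norm_eq_abs]
      simp only [mul_one, mul_zero]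
      rw [sq_abs, sq_abs, mul_pow, mul_pow, h0, hk', hs2]
      ring
    have hsum : (γ 0)⁻¹ + t ^ 2 * (γ k)⁻¹ = l ^ 2 := by
      rw [ht2, mul_assoc, mul_inv_cancel₀ (hγpos k).ne', mul_one]
      ring
    refine ⟨(n⁻¹) • x, ⟨?_, ?_⟩, ?_⟩
    · rw [norm_smul, hxnorm, Real.norm_eq_abs, abs_of_pos (by positivity)]
      field_simp
    · refine ⟨(n⁻¹) • y, ?_, ?_⟩
      · rw [map_smul, hydef, map_add, map_smul, map_smul, hSφ, hSφ, smul_smul,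
          smul_smul, inv_mul_cancel₀ hsq0.ne', one_smul, mul_assoc,
          inv_mul_cancel₀ hsqk.ne', mul_one]
      · apply norm_le_of_sq
        rw [norm_smul, mul_pow, Real.norm_eq_abs, sq_abs, hynorm, hsum]
        have hinv : n⁻¹ ^ 2 ≤ 1 := by
          rw [inv_pow]
          refine inv_le_one_of_one_le₀ ?_
          rw [hn2]
          nlinarith [sq_nonneg t]
        exact mul_le_of_le_one_left (sq_nonneg l) hinv
    · rw [real_inner_smul_right, hxdef, inner_add_right, real_inner_smul_right,
        real_inner_comm (φ 0) w, ha, real_inner_comm (φ k) w, ← hc, zero_add]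
      have h1 : 0 < t * s * c := by
        rw [mul_assoc]; exact mul_pos htpos hsc
      exact mul_pos (inv_pos.2 hnpos) h1
  · -- the coefficient along φ 0 is nonzero; take ± φ 0
    set a := ⟪φ 0, w⟫ with hadef
    set s : ℝ := if 0 < a then 1 else -1 with hsdef
    have hsa : 0 < s * a := by
      rcases lt_trichotomy a 0 with h | h | h
      · have : s = -1 := by simp [hsdef, not_lt.2 h.le]
        rw [this]; linarith
      · exact absurd h ha
      · have : s = 1 := by simp [hsdef, h]
        rw [this]; linarith
    have habs : |s| = 1 := by
      rcases lt_or_ge 0 a with h | h <;> simp [hsdef, h, not_lt.2]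
    refine ⟨s • φ 0, ⟨?_, ?_⟩, ?_⟩
    · rw [norm_smul, Real.norm_eq_abs, habs, hnφ, one_mul]
    · refine ⟨(s * (Real.sqrt (γ 0))⁻¹) • φ 0, ?_, ?_⟩
      · rw [map_smul, hSφ, smul_smul, mul_assoc, inv_mul_cancel₀ hsq0.ne',
          mul_one]
      · rw [norm_smul, Real.norm_eq_abs, abs_mul, habs, one_mul, hnφ, mul_one,
          abs_of_nonneg (by positivity)]
        exact hl.le
    · rw [real_inner_smul_right, real_inner_comm (φ 0) w, ← hadef]
      exact hsa
end

section
/- (Theorem 2(b), maximality at center; halfspace-probability form.) Let H be a separable real Hilbert space with orthonormal basis (φ_k)_{k≥1}, γ_k > 0 with γ_1 ≥ γ_k for all k, S : H → H bounded self-adjoint with S φ_k = γ_k^{1/2} φ_k for all k, and λ > γ_1^{-1/2}. Let (Ω, P) be a probability space and X : Ω → H a Borel-measurable random element that is halfspace symmetric about θ ∈ H. Then inf_{v ∈ V_λ(S)} P(⟨X − θ, v⟩ ≥ 0) ≥ 1/2, and for every x ∈ H, inf_{v ∈ V_λ(S)} P(⟨X − x, v⟩ ≥ 0) ≤ inf_{v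 ∈ V_λ(S)} P(⟨X − θ, v⟩ ≥ 0); that is, the regularized halfspace depth is maximized at the center θ. -/
open MeasureTheory
open scoped RealInnerProductSpace ENNReal

/-!
If `x ≠ θ`, some direction `v ∈ V_λ(S)` has `⟪x - θ, v⟫ > 0`: since `λ > γ₁^{-1/2}`, the unit
vector `±φ₁` lies in `V_λ(S)` with slack, and tilting it slightly towards an eigenvector `φ_k`
not orthogonal to `x - θ` keeps it in `V_λ(S)`. The halfspace `{⟪X - x, v⟫ ≥ 0}` is then disjoint
from `{⟪X - θ, -v⟫ ≥ 0}`, which has probability at least `1/2` by symmetry, so the depth of `x`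
is at most `1/2`, while the depth of `θ` is at least `1/2`.
-/

theorem HilbertBasis.exists_inner_ne_zero {ι 𝕜 E : Type*} [RCLike 𝕜] [NormedAddCommGroup E]
    [InnerProductSpace 𝕜 E] (b : HilbertBasis ι 𝕜 E) {x : E} (hx : x ≠ 0) :
    ∃ i, inner 𝕜 (b i) x ≠ 0 := by
  by_contra! h
  have hsum := b.hasSum_inner_mul_inner x x
  simp only [h, mul_zero] at hsum
  exact hx (inner_self_eq_zero.mp (hsum.unique hasSum_zero))

section regDirSet

variable {H : Type*} [NormedAddCommGroup H] [InnerProductSpace ℝ H]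

theorem inv_norm_smul_mem_regDirSet (S : H →L[ℝ] H) {l : ℝ} {u : H} (hw : S u ≠ 0)
    (hu : ‖u‖ ≤ l * ‖S u‖) : ‖S u‖⁻¹ • S u ∈ regDirSet S l := by
  have hpos : 0 < ‖S u‖ := norm_pos_iff.mpr hw
  refine ⟨norm_smul_inv_norm hw, ‖S u‖⁻¹ • u, map_smul S _ _, ?_⟩
  rw [norm_smul, norm_inv, norm_norm, inv_mul_le_iff₀ hpos, mul_comm]
  exact hu

theorem exists_mem_regDirSet_inner_pos (S : H →L[ℝ] H) {l : ℝ} {u₀ : H} (hu₀ : ‖S u₀‖ = 1)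
    (hlt : ‖u₀‖ < l) {d y : H} (hy : 0 < ⟪d, S y⟫) :
    ∃ v ∈ regDirSet S l, 0 < ⟪d, v⟫ := by
  wlog hd : 0 ≤ ⟪d, S u₀⟫ generalizing u₀
  · exact this (by rwa [map_neg, norm_neg]) (by rwa [norm_neg])
      (by rw [map_neg, inner_neg_right]; linarith)
  set z := S y
  have hz : 0 < ‖z‖ := norm_pos_iff.mpr fun h => by simp [h] at hy
  have hl : 0 < l := (norm_nonneg u₀).trans_lt hlt
  -- `t` is chosen so that `‖u₀‖ + t ‖y‖ = l (1 - t ‖z‖)`.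
  set t := (l - ‖u₀‖) / (‖y‖ + l * ‖z‖)
  have ht : 0 < t := div_pos (by linarith) (by positivity)
  have ht_mul : t * (‖y‖ + l * ‖z‖) = l - ‖u₀‖ := div_mul_cancel₀ _ (by positivity)
  set u := u₀ + t • y
  have hSu : S u = S u₀ + t • z := by simp only [u, z, map_add, map_smul]
  have hinner : 0 < ⟪d, S u⟫ := by
    rw [hSu, inner_add_right, real_inner_smul_right]
    positivity
  have hw : S u ≠ 0 := fun h => by simp [h] at hinner
  have hnorm : ‖u‖ ≤ l * ‖S u‖ :=
    calc ‖u‖ ≤ ‖u₀‖ + t * ‖y‖ := by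
            simpa only [norm_smul, Real.norm_of_nonneg ht.le] using norm_add_le u₀ (t • y)
      _ = l * (1 - t * ‖z‖) := by linarith
      _ ≤ l * ‖S u‖ := by
            gcongr
            have := norm_sub_le (S u₀ + t • z) (t • z)
            rw [add_sub_cancel_right, hu₀, norm_smul, Real.norm_of_nonneg ht.le] at this
            rw [hSu]
            linarith
  refine ⟨_, inv_norm_smul_mem_regDirSet S hw hnorm, ?_⟩
  rw [real_inner_smul_right]
  exact mul_pos (inv_pos.mpr (norm_pos_iff.mpr hw)) hinner

end regDirSet

theorem measure_inner_sub_nonneg_le_half {H Ω : Type*} [NormedAddCommGroup H]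
    [InnerProductSpace ℝ H] [MeasurableSpace H] [OpensMeasurableSpace H] [MeasurableSpace Ω]
    {P : Measure Ω} [IsProbabilityMeasure P] {X : Ω → H} (hX : Measurable X) {θ x v : H}
    (hsymm : (1 / 2 : ℝ≥0∞) ≤ P {ω | 0 ≤ ⟪X ω - θ, -v⟫}) (hv : 0 < ⟪x - θ, v⟫) :
    P {ω | 0 ≤ ⟪X ω - x, v⟫} ≤ 1 / 2 := by
  have hmeas : MeasurableSet {ω | 0 ≤ ⟪X ω - θ, -v⟫} :=
    measurableSet_le measurable_const
      (((continuous_id.sub continuous_const).inner continuous_const).measurable.comp hX)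
  have hsub : {ω | 0 ≤ ⟪X ω - x, v⟫} ⊆ {ω | 0 ≤ ⟪X ω - θ, -v⟫}ᶜ := by
    intro ω (hx : 0 ≤ ⟪X ω - x, v⟫) (hθ : 0 ≤ ⟪X ω - θ, -v⟫)
    have hsplit : ⟪X ω - θ, v⟫ = ⟪X ω - x, v⟫ + ⟪x - θ, v⟫ := by
      rw [← inner_add_left, sub_add_sub_cancel]
    rw [inner_neg_right] at hθ
    linarith
  calc P {ω | 0 ≤ ⟪X ω - x, v⟫} ≤ 1 - P {ω | 0 ≤ ⟪X ω - θ, -v⟫} :=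
        (measure_mono hsub).trans (prob_compl_eq_one_sub hmeas).le
    _ ≤ 1 - 1 / 2 := tsub_le_tsub_left hsymm 1
    _ = 1 / 2 := by rw [one_div, ENNReal.one_sub_inv_two]

theorem crhd_maximality_at_center_general {H : Type*} [NormedAddCommGroup H]
    [InnerProductSpace ℝ H] [MeasurableSpace H] [BorelSpace H]
    {Ω : Type*} [MeasurableSpace Ω] (P : Measure Ω) [IsProbabilityMeasure P]
    (X : Ω → H) (hX : Measurable X)
    (φ : HilbertBasis ℕ ℝ H)
    (γ : ℕ → ℝ) (hγpos : ∀ k, 0 < γ k)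
    (S : H →L[ℝ] H)
    (hSφ : ∀ k, S (φ k) = Real.sqrt (γ k) • φ k)
    (l : ℝ) (hl : (Real.sqrt (γ 0))⁻¹ < l)
    (θ : H)
    (hsymm : ∀ v : H, ‖v‖ = 1 → (1 / 2 : ℝ≥0∞) ≤ P {ω | 0 ≤ ⟪X ω - θ, v⟫}) :
    (1 / 2 : ℝ≥0∞) ≤ (⨅ v ∈ regDirSet S l, P {ω | 0 ≤ ⟪X ω - θ, v⟫}) ∧
    ∀ x : H, (⨅ v ∈ regDirSet S l, P {ω | 0 ≤ ⟪X ω - x, v⟫})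
      ≤ ⨅ v ∈ regDirSet S l, P {ω | 0 ≤ ⟪X ω - θ, v⟫} := by
  have hθ : (1 / 2 : ℝ≥0∞) ≤ ⨅ v ∈ regDirSet S l, P {ω | 0 ≤ ⟪X ω - θ, v⟫} :=
    le_iInf₂ fun v hv => hsymm v hv.1
  refine ⟨hθ, fun x => ?_⟩
  rcases eq_or_ne x θ with rfl | hx
  · exact le_rfl
  obtain ⟨k, hk⟩ := φ.exists_inner_ne_zero (sub_ne_zero.mpr hx)
  have hs0 : 0 < Real.sqrt (γ 0) := Real.sqrt_pos.mpr (hγpos 0)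
  have hS0 : S ((Real.sqrt (γ 0))⁻¹ • φ 0) = φ 0 := by
    rw [map_smul, hSφ, smul_smul, inv_mul_cancel₀ hs0.ne', one_smul]
  have hSk : 0 < ⟪x - θ, S (⟪φ k, x - θ⟫ • φ k)⟫ := by
    rw [map_smul, hSφ, smul_smul, real_inner_smul_right, real_inner_comm (φ k), mul_right_comm]
    exact mul_pos (mul_self_pos.mpr hk) (Real.sqrt_pos.mpr (hγpos k))
  obtain ⟨v, hv, hpos⟩ := exists_mem_regDirSet_inner_pos S
    (by rw [hS0, φ.orthonormal.1 0]) (by rwa [norm_smul, φ.orthonormal.1 0, mul_one,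
      norm_inv, Real.norm_of_nonneg hs0.le]) hSk
  calc (⨅ w ∈ regDirSet S l, P {ω | 0 ≤ ⟪X ω - x, w⟫}) ≤ P {ω | 0 ≤ ⟪X ω - x, v⟫} :=
        iInf₂_le v hv
    _ ≤ 1 / 2 := measure_inner_sub_nonneg_le_half hX (hsymm (-v) (by rw [norm_neg, hv.1])) hpos
    _ ≤ _ := hθ

/-- Theorem 2(b), maximality at center: if `X` is halfspace
symmetric about `θ` and `λ > γ_1^{-1/2}`, then the regularized halfspace depth
of `θ` is at least `1/2` and the depth of any point `x` is at most that of `θ`. -/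
theorem crhd_maximality_at_center {H : Type*} [NormedAddCommGroup H]
    [InnerProductSpace ℝ H] [CompleteSpace H] [MeasurableSpace H] [BorelSpace H]
    {Ω : Type*} [MeasurableSpace Ω] (P : Measure Ω) [IsProbabilityMeasure P]
    (X : Ω → H) (hX : Measurable X)
    (φ : HilbertBasis ℕ ℝ H)
    (γ : ℕ → ℝ) (hγpos : ∀ k, 0 < γ k) (hγmax : ∀ k, γ k ≤ γ 0)
    (S : H →L[ℝ] H) (hS : ∀ x y : H, ⟪S x, y⟫ = ⟪x, S y⟫)
    (hSφ : ∀ k, S (φ k) = Real.sqrt (γ k) • φ k)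
    (l : ℝ) (hl : (Real.sqrt (γ 0))⁻¹ < l)
    (θ : H)
    (hsymm : ∀ v : H, ‖v‖ = 1 → (1 / 2 : ℝ≥0∞) ≤ P {ω | 0 ≤ ⟪X ω - θ, v⟫}) :
    (1 / 2 : ℝ≥0∞) ≤ (⨅ v ∈ regDirSet S l, P {ω | 0 ≤ ⟪X ω - θ, v⟫}) ∧
    ∀ x : H, (⨅ v ∈ regDirSet S l, P {ω | 0 ≤ ⟪X ω - x, v⟫})
      ≤ ⨅ v ∈ regDirSet S l, P {ω | 0 ≤ ⟪X ω - θ, v⟫} :=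
  crhd_maximality_at_center_general P X hX φ γ hγpos S hSφ l hl θ hsymm
end

section
/- (Theorem 2(c), monotonicity relative to the deepest point; halfspace-probability form.) Let H be a real inner product space, (Ω, P) a probability space, X : Ω → H a Borel-measurable random element, S : H → H a bounded self-adjoint linear operator, λ ∈ (0,∞), and suppose the regularized direction set V_λ(S) is nonempty. Define D_λ(x) = inf_{v ∈ V_λ(S)} P(⟨X − x, v⟩ ≥ 0). Let θ ∈ H be a deepest point, i.e., D_λ(x) ≤ D_λ(θ) for all x ∈ H. Then for every x ∈ H and every α ∈ [0,1], D_λ(x) ≤ D_λ(θ + α (x − θ)). -/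
open MeasureTheory
open scoped RealInnerProductSpace ENNReal

/-- The regularized halfspace depth `D_λ(x) = inf_{v ∈ V_λ(S)} P(⟨X − x, v⟩ ≥ 0)`. -/
noncomputable def regHalfspaceDepth {H : Type*} [NormedAddCommGroup H]
    [InnerProductSpace ℝ H] {Ω : Type*} [MeasurableSpace Ω]
    (P : MeasureTheory.Measure Ω) (X : Ω → H) (S : H →L[ℝ] H) (l : ℝ) (x : H) : ℝ≥0∞ :=
  ⨅ v ∈ regDirSet S l, P {ω | 0 ≤ ⟪X ω - x, v⟫}

/-- Theorem 2(c), monotonicity relative to the deepest point: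
if `θ` is a deepest point, then the depth along the segment from `θ` to `x` is
at least the depth at `x`. -/
theorem crhd_monotonicity_deepest_point {H : Type*} [NormedAddCommGroup H]
    [InnerProductSpace ℝ H] [MeasurableSpace H] [BorelSpace H]
    {Ω : Type*} [MeasurableSpace Ω] (P : Measure Ω) [IsProbabilityMeasure P]
    (X : Ω → H) (hX : Measurable X)
    (S : H →L[ℝ] H) (hS : ∀ x y : H, ⟪S x, y⟫ = ⟪x, S y⟫)
    (l : ℝ) (hl : 0 < l) (hne : (regDirSet S l).Nonempty)
    (θ : H) (hθ : ∀ x : H, regHalfspaceDepth P X S l x ≤ regHalfspaceDepth P X S l θ) :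
    ∀ x : H, ∀ α : ℝ, α ∈ Set.Icc (0 : ℝ) 1 →
      regHalfspaceDepth P X S l x ≤ regHalfspaceDepth P X S l (θ + α • (x - θ)) := by
  intro x α hα
  obtain ⟨hα0, hα1⟩ := hα
  rw [regHalfspaceDepth]
  refine le_iInf₂ fun v hv => ?_
  by_cases h : ⟪x - θ, v⟫ ≤ 0
  · calc regHalfspaceDepth P X S l x ≤ regHalfspaceDepth P X S l θ := hθ x
      _ ≤ P {ω | 0 ≤ ⟪X ω - θ, v⟫} := biInf_le _ hv
      _ ≤ P {ω | 0 ≤ ⟪X ω - (θ + α • (x - θ)), v⟫} := by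
          refine measure_mono fun ω hω => ?_
          simp only [Set.mem_setOf_eq] at hω ⊢
          have : X ω - (θ + α • (x - θ)) = (X ω - θ) - α • (x - θ) := by abel
          rw [this, inner_sub_left, real_inner_smul_left]
          nlinarith
  · push_neg at h
    calc regHalfspaceDepth P X S l x ≤ P {ω | 0 ≤ ⟪X ω - x, v⟫} := biInf_le _ hv
      _ ≤ P {ω | 0 ≤ ⟪X ω - (θ + α • (x - θ)), v⟫} := by
          refine measure_mono fun ω hω => ?_
          simp only [Set.mem_setOf_eq] at hω ⊢
          have : X ω - (θ + α • (x - θ)) = (X ω - x) + (1 - α) • (x - θ) := by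
            rw [sub_smul, one_smul, smul_sub]; abel
          rw [this, inner_add_left, real_inner_smul_left]
          nlinarith
end

section
/- (Theorem 2(a), isometry invariance; halfspace-probability form.) Let H be a real inner product space, (Ω, P) a probability space, X : Ω → H a Borel-measurable random element, A : H → H a surjective linear isometry (linear isometric equivalence), b ∈ H, S : H → H a bounded self-adjoint linear operator, and λ ∈ (0,∞). Let S' = A ∘ S ∘ A⁻¹ (the square root of the transformed covariance A Γ A* when Γ = S², since A* = A⁻¹). Then for every x ∈ H, inf_{v ∈ V_λ(S')} P(⟨(A(X) + b) − (A(x) + b), v⟩ ≥ 0) = inf_{v ∈ V_λ(S)} P(⟨X − x, v⟩ ≥ 0); that is, the regularized halfspace depth of the transformed point A x + b with respect to the transformed random element A X + b equals the depth of x with respect to X. -/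
open MeasureTheory
open scoped RealInnerProductSpace ENNReal

/-- The conjugated operator `A ∘ S ∘ A⁻¹` for a surjective linear isometry `A`. -/
noncomputable def conjOp {H : Type*} [NormedAddCommGroup H] [InnerProductSpace ℝ H]
    (A : H ≃ₗᵢ[ℝ] H) (S : H →L[ℝ] H) : H →L[ℝ] H :=
  (A.toContinuousLinearEquiv : H →L[ℝ] H).comp
    (S.comp (A.symm.toContinuousLinearEquiv : H →L[ℝ] H))

lemma conjOp_apply {H : Type*} [NormedAddCommGroup H] [InnerProductSpace ℝ H]
    (A : H ≃ₗᵢ[ℝ] H) (S : H →L[ℝ] H) (u : H) :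
    conjOp A S u = A (S (A.symm u)) := rfl

/-- Theorem 2(a), isometry invariance: the regularized halfspace
depth of `A x + b` with respect to `A X + b`, computed with the transformed
square-root operator `S' = A ∘ S ∘ A⁻¹`, equals the depth of `x` with respect
to `X` computed with `S`. -/
theorem crhd_isometry_invariance {H : Type*} [NormedAddCommGroup H]
    [InnerProductSpace ℝ H] [MeasurableSpace H] [BorelSpace H]
    {Ω : Type*} [MeasurableSpace Ω] (P : Measure Ω) [IsProbabilityMeasure P]
    (X : Ω → H) (hX : Measurable X)
    (A : H ≃ₗᵢ[ℝ] H) (b : H)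
    (S : H →L[ℝ] H) (hS : ∀ x y : H, ⟪S x, y⟫ = ⟪x, S y⟫)
    (l : ℝ) (hl : 0 < l) :
    ∀ x : H,
      (⨅ v ∈ regDirSet (conjOp A S) l, P {ω | 0 ≤ ⟪(A (X ω) + b) - (A x + b), v⟫})
        = ⨅ v ∈ regDirSet S l, P {ω | 0 ≤ ⟪X ω - x, v⟫} := by
  intro x
  have hset : ∀ (ω : Ω) (v : H),
      ⟪(A (X ω) + b) - (A x + b), A v⟫ = ⟪X ω - x, v⟫ := by
    intro ω v
    have : (A (X ω) + b) - (A x + b) = A (X ω - x) := by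
      rw [map_sub]; abel
    rw [this, A.inner_map_map]
  apply le_antisymm
  · refine le_iInf₂ fun v hv => ?_
    obtain ⟨hv1, u, hu, hul⟩ := hv
    refine iInf₂_le_of_le (A v) ⟨by simp [hv1], A u, ?_, by simpa using hul⟩
      (le_of_eq ?_)
    · rw [conjOp_apply]; simp [hu]
    · congr 1
      ext ω
      simp only [Set.mem_setOf_eq, hset ω v]
  · refine le_iInf₂ fun v hv => ?_
    obtain ⟨hv1, u, hu, hul⟩ := hv
    refine iInf₂_le_of_le (A.symm v) ⟨by simp [hv1], A.symm u, ?_, by simpa using hul⟩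
      (le_of_eq ?_)
    · rw [conjOp_apply] at hu
      apply A.injective
      simpa using hu
    · congr 1
      ext ω
      have := hset ω (A.symm v)
      simp only [A.apply_symm_apply] at this
      simp only [Set.mem_setOf_eq]
      rw [this]
end

section
/- For every u ∈ ℝ, the integral ∫_0^1 sign(sin(2π(t + u))) dt equals 0, where sign denotes the real sign function (sign(x) = 1 for x > 0, −1 for x < 0, and 0 for x = 0). Consequently, the projection ⟨X₁, 1⟩ = ∫_0^1 X₁(t) dt of the process X₁(t) = sign(sin(2π(t + U))) onto the constant direction v ≡ 1 in L²([0,1]) is almost surely 0, whereas the corresponding projection of the Rademacher process X₀(t) ≡ S equals S. -/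
open MeasureTheory

noncomputable def g (t : ℝ) : ℝ := Real.sign (Real.sin (2 * Real.pi * t))

lemma g_meas : Measurable g := by
  unfold g
  have hs : Measurable Real.sign := by
    have he : Real.sign = fun r : ℝ => if r < 0 then (-1:ℝ) else if 0 < r then 1 else 0 := by
      funext r; rfl
    rw [he]
    exact Measurable.ite measurableSet_Iio measurable_const
      (Measurable.ite measurableSet_Ioi measurable_const measurable_const)
  exact hs.comp (by fun_prop)

lemma g_intInt (a b : ℝ) : IntervalIntegrable g volume a b := by
  apply IntervalIntegrable.mono_fun (intervalIntegrable_const (c := (1:ℝ)))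
    g_meas.aestronglyMeasurable
  filter_upwards with t
  simp only [Real.norm_eq_abs]
  unfold g
  rcases Real.sign_apply_eq (Real.sin (2 * Real.pi * t)) with h | h | h <;> rw [h] <;> norm_num

lemma g_anti (t : ℝ) : g (t + 1/2) = - g t := by
  unfold g
  have : 2 * Real.pi * (t + 1/2) = 2 * Real.pi * t + Real.pi := by ring
  rw [this, Real.sin_add_pi, Real.sign_neg]

lemma g_integral : (∫ t in (0:ℝ)..1, g t) = 0 := by
  have h1 : (∫ t in (0:ℝ)..1, g t) =
      (∫ t in (0:ℝ)..(1/2), g t) + ∫ t in (1/2:ℝ)..1, g t := by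
    rw [intervalIntegral.integral_add_adjacent_intervals (g_intInt 0 (1/2)) (g_intInt (1/2) 1)]
  have h2 : (∫ t in (1/2:ℝ)..1, g t) = ∫ t in (0:ℝ)..(1/2), g (t + 1/2) := by
    rw [intervalIntegral.integral_comp_add_right]
    norm_num
  rw [h1, h2]
  simp_rw [g_anti]
  rw [intervalIntegral.integral_neg]
  ring

/-- for every `u`, `∫_0^1 sign(sin(2π(t+u))) dt = 0`;
consequently the projection `⟨X₁, 1⟩` of the process
`X₁(t) = sign(sin(2π(t+U)))` onto the constant direction `1` in `L²([0,1])` is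
(almost surely) `0`, whereas the corresponding projection `∫_0^1 s dt = s` of
the constant-in-time Rademacher process `X₀(t) ≡ S` equals `S`. -/
theorem integral_sign_sin_shift_eq_zero :
    (∀ u : ℝ,
      (∫ t in (0 : ℝ)..1, Real.sign (Real.sin (2 * Real.pi * (t + u)))) = 0) ∧
    (∀ s : ℝ, (∫ _ in (0 : ℝ)..1, s) = s) := by
  constructor
  · intro u
    have : (∫ t in (0 : ℝ)..1, Real.sign (Real.sin (2 * Real.pi * (t + u)))) =
        ∫ t in (0:ℝ)..1, g (t + u) := rfl
    rw [this, intervalIntegral.integral_comp_add_right]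
    have hper : Function.Periodic g 1 := by
      intro t
      unfold g
      have : 2 * Real.pi * (t + 1) = 2 * Real.pi * t + 2 * Real.pi := by ring
      rw [this, Real.sin_add_two_pi]
    have h := hper.intervalIntegral_add_eq u 0
    norm_num at h ⊢
    rw [add_comm]
    rw [h]
    simpa using g_integral
  · intro s
    simp
end
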